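/- Let λ = (λ_1, …, λ_r) and τ = (τ_1, …, τ_s) be partitions of n. Then ∑_{i,j} max(0, λ_i + τ_j − n) ≤ n. Consequently, the multiset ⟨λ_i + τ_j − n⟩_n, consisting of all positive values λ_i + τ_j − n together with enough 1's to sum to n, is a well-defined partition of n. -/

import Mathlib

/-!
Every part `x` of `λ` is at most `n`, so `y ↦ x + y - n` is `y ↦ y - (n - x)`. Truncated
subtraction is superadditive, whence `∑ⱼ (x + τⱼ - n) ≤ x + ∑ⱼ τⱼ - n = x`, and summing over the
parts of `λ` bounds the double sum by `∑ᵢ λᵢ = n`. Dropping zeros does not change a sum, so the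
positive values leave room for the `1`'s that complete them to a partition of `n`.
-/

namespace Multiset

theorem sum_map_tsub_le (t : Multiset ℕ) (c : ℕ) : (t.map (· - c)).sum ≤ t.sum - c := by
  induction t using Multiset.induction_on with
  | empty => simp
  | cons y t ih => rw [map_cons, sum_cons, sum_cons]; omega

theorem sum_map_add_tsub_le {x n : ℕ} (hx : x ≤ n) (t : Multiset ℕ) :
    (t.map fun y => x + y - n).sum ≤ x + t.sum - n := by
  have hshift : (fun y => x + y - n) = (· - (n - x)) := by funext y; omega
  rw [hshift]
  exact (sum_map_tsub_le t _).trans (by omega)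

theorem sum_bind_map_add_tsub_le {n : ℕ} {lam tau : Multiset ℕ} (hlam : lam.sum ≤ n)
    (htau : tau.sum ≤ n) : (lam.bind fun x => tau.map fun y => x + y - n).sum ≤ lam.sum := by
  rw [sum_bind]
  refine sum_map_le_sum _ fun x hx => ?_
  have hxn : x ≤ n := (le_sum_of_mem hx).trans hlam
  exact (sum_map_add_tsub_le hxn tau).trans (by omega)

theorem sum_filter_pos (s : Multiset ℕ) : (s.filter (0 < ·)).sum = s.sum := by
  rw [← sum_filter_add_sum_filter_not (s := s) (0 < ·), left_eq_add]
  exact sum_eq_zero fun x hx => Nat.eq_zero_of_not_pos (mem_filter.1 hx).2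

theorem pos_of_mem_add_replicate_one {c : Multiset ℕ} (hc : ∀ x ∈ c, 0 < x) (k : ℕ) :
    ∀ x ∈ c + replicate k 1, 0 < x := by
  intro x hx
  rcases mem_add.1 hx with hx | hx
  · exact hc x hx
  · rw [eq_of_mem_replicate hx]; exact Nat.one_pos

theorem sum_add_replicate_one {c : Multiset ℕ} {n : ℕ} (hc : c.sum ≤ n) :
    (c + replicate (n - c.sum) 1).sum = n := by
  rw [sum_add, sum_replicate, smul_eq_mul, mul_one]; omega

end Multiset

theorem stmt17_general (n : ℕ) (lam tau : Multiset ℕ)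
    (hlsum : lam.sum = n) (htsum : tau.sum = n) :
    (lam.bind (fun x => tau.map (fun y => x + y - n))).sum ≤ n ∧
      (let c := (lam.bind (fun x => tau.map (fun y => x + y - n))).filter
          (fun z => 0 < z)
       let mu := c + Multiset.replicate (n - c.sum) 1
       (∀ x ∈ mu, 0 < x) ∧ mu.sum = n) := by
  have hbound : (lam.bind fun x => tau.map fun y => x + y - n).sum ≤ n :=
    (Multiset.sum_bind_map_add_tsub_le hlsum.le htsum.le).trans hlsum.le
  refine ⟨hbound,
    Multiset.pos_of_mem_add_replicate_one (fun z hz => (Multiset.mem_filter.1 hz).2) _,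
    Multiset.sum_add_replicate_one ((Multiset.sum_filter_pos _).trans_le hbound)⟩

/-- For partitions `lam` and `tau` of `n`, one has `∑_{i,j} max(0, λᵢ + τⱼ - n) ≤ n`,
so the multiset `⟨λᵢ + τⱼ - n⟩_n` (positive values together with enough `1`'s to sum
to `n`) is a well-defined partition of `n`. -/
theorem stmt17 (n : ℕ) (lam tau : Multiset ℕ)
    (hlpos : ∀ x ∈ lam, 0 < x) (hlsum : lam.sum = n)
    (htpos : ∀ x ∈ tau, 0 < x) (htsum : tau.sum = n) :
    (lam.bind (fun x => tau.map (fun y => x + y - n))).sum ≤ n ∧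
      (let c := (lam.bind (fun x => tau.map (fun y => x + y - n))).filter
          (fun z => 0 < z)
       let mu := c + Multiset.replicate (n - c.sum) 1
       (∀ x ∈ mu, 0 < x) ∧ mu.sum = n) :=
  stmt17_general n lam tau hlsum htsum
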